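/- Let R > 0 and m_1, m_2 > 0, and let w_1, w_2 ∈ ℂ with Im w_1 > 0, Im w_2 > 0 and w_1 ≠ w_2. If Re w_1 = 0 (i.e. w_1 lies on the imaginary axis), then the pair (w_1, w_2) does not satisfy the hyperbolic relative-equilibrium equations with n = 2. -/

import Mathlib

open Complex ComplexConjugate Finset

/-- The quantity `Θ_{3,(k,j)}` appearing in the denominators of the equations of
motion of the curved `n`-body problem in the Poincaré upper half plane. -/
noncomputable def halfTheta (z w : ℂ) : ℝ :=
  (((conj z + z) * (conj w + w)
      - 2 * ((((‖z‖) ^ 2 + (‖w‖) ^ 2 : ℝ)) : ℂ)) ^ 2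
    - (conj z - z) ^ 2 * (conj w - w) ^ 2).re

/-- The points `c k` satisfy the hyperbolic relative-equilibrium equations in the
Poincaré upper half plane with parameter `R` and masses `m`. -/
def HyperbolicRelEq (R : ℝ) {n : ℕ} (m : Fin n → ℝ) (c : Fin n → ℂ) : Prop :=
  ∀ k : Fin n,
    (R : ℂ) * (c k + conj (c k)) * c k / (8 * (c k - conj (c k)) ^ 4)
      = ∑ j ∈ Finset.univ.erase k,
          (m j : ℂ) * (c j - conj (c j)) ^ 2 * (c k - c j) * (conj (c j) - c k)
            / (((halfTheta (c k) (c j)) ^ ((3 : ℝ) / 2) : ℝ) : ℂ)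

/-
The left-hand side of the equation for `w₁` carries the factor `w₁ + conj w₁ = 2 Re w₁ = 0`,
while the single interaction term on the right is a product of nonzero factors, because
`Θ = 4 |w₁ - w₂|² |w₁ - conj w₂|²` is positive for distinct points of the upper half plane.
-/

lemma halfTheta_eq_normSq (z w : ℂ) :
    halfTheta z w = 4 * (normSq (z - w) * normSq (z - conj w)) := by
  rw [halfTheta, Complex.sq_norm, Complex.sq_norm]
  simp only [normSq_apply, ofReal_add, ofReal_mul, pow_two, sub_re,
    mul_re, add_re, conj_re, add_im, conj_im, neg_add_cancel, mul_zero, sub_zero, re_ofNat,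
    ofReal_re, ofReal_im, im_ofNat, mul_im, zero_mul, add_zero, sub_im, sub_self, zero_sub,
    mul_neg, neg_mul, neg_neg, sub_neg_eq_add]
  ring

lemma halfTheta_pos {z w : ℂ} (hzw : z ≠ w) (hzw' : z ≠ conj w) : 0 < halfTheta z w := by
  rw [halfTheta_eq_normSq]
  have h₁ : 0 < normSq (z - w) := normSq_pos.2 (sub_ne_zero.2 hzw)
  have h₂ : 0 < normSq (z - conj w) := normSq_pos.2 (sub_ne_zero.2 hzw')
  positivity

lemma ne_conj_of_im_pos {z w : ℂ} (hz : 0 < z.im) (hw : 0 < w.im) : z ≠ conj w := by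
  intro h
  have := congrArg im h
  rw [conj_im] at this
  linarith

lemma interaction_ne_zero {m : ℝ} (hm : m ≠ 0) {z w : ℂ} (hz : 0 < z.im) (hw : 0 < w.im)
    (hzw : z ≠ w) :
    (m : ℂ) * (w - conj w) ^ 2 * (z - w) * (conj w - z)
      / (((halfTheta z w) ^ ((3 : ℝ) / 2) : ℝ) : ℂ) ≠ 0 := by
  have hΘ : (halfTheta z w) ^ ((3 : ℝ) / 2) ≠ 0 :=
    (Real.rpow_pos_of_pos (halfTheta_pos hzw (ne_conj_of_im_pos hz hw)) _).ne'
  have hww : w - conj w ≠ 0 := sub_ne_zero.2 (ne_conj_of_im_pos hw hw)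
  have hzw₁ : z - w ≠ 0 := sub_ne_zero.2 hzw
  have hzw₂ : conj w - z ≠ 0 := sub_ne_zero.2 (ne_conj_of_im_pos hz hw).symm
  have hm' : (m : ℂ) ≠ 0 := ofReal_ne_zero.2 hm
  exact div_ne_zero (mul_ne_zero (mul_ne_zero (mul_ne_zero hm' (pow_ne_zero 2 hww)) hzw₁) hzw₂)
    (ofReal_ne_zero.2 hΘ)

theorem no_hyperbolicRelEq_on_imaginary_axis_general (R m₁ m₂ : ℝ) (hm₂ : 0 < m₂)
    (w₁ w₂ : ℂ) (h₁ : 0 < w₁.im) (h₂ : 0 < w₂.im) (hne : w₁ ≠ w₂) (hre : w₁.re = 0) :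
    ¬ HyperbolicRelEq R ![m₁, m₂] ![w₁, w₂] := by
  intro H
  have h := H 0
  have hothers : univ.erase (0 : Fin 2) = {1} := by decide
  rw [hothers, sum_singleton] at h
  simp only [Matrix.cons_val_zero, Matrix.cons_val_one] at h
  have hlhs : w₁ + conj w₁ = 0 := by simp [add_conj, hre]
  rw [hlhs, mul_zero, zero_mul, zero_div] at h
  exact interaction_ne_zero hm₂.ne' h₁ h₂ hne h.symm

/-- There is no hyperbolic relative equilibrium of the curved 2-body problem in which
one body moves on the geodesic vertical half line (the imaginary axis). -/
theorem no_hyperbolicRelEq_on_imaginary_axis (R m₁ m₂ : ℝ) (hR : 0 < R)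
    (hm₁ : 0 < m₁) (hm₂ : 0 < m₂)
    (w₁ w₂ : ℂ) (h₁ : 0 < w₁.im) (h₂ : 0 < w₂.im) (hne : w₁ ≠ w₂) (hre : w₁.re = 0) :
    ¬ HyperbolicRelEq R ![m₁, m₂] ![w₁, w₂] :=
  no_hyperbolicRelEq_on_imaginary_axis_general R m₁ m₂ hm₂ w₁ w₂ h₁ h₂ hne hre
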